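/- Let B ∈ M_r(ℂ[[t]]) be a matrix of formal power series with det B = 1 and satisfying ρ(B)ᵀ = B (i.e. B(t)ᵀ = B(−t), equivalently B(t) = B(−t)ᵀ). Then there exists C ∈ M_r(ℂ[[t]]) with det C = 1 such that B = ρ(C)ᵀ·C, i.e. B(t) = C(−t)ᵀ·C(t). -/

import Mathlib

/-!
The constant term `B(0)` is a nondegenerate complex symmetric matrix, hence `B(0) = AᵀA`.
Conjugating by the constant matrix `A⁻¹` reduces to the case `B(0) = 1`. Then `B = 1 + N` with
`N(0) = 0`, and the binomial series `c = ∑ₖ (1/2 choose k) Nᵏ` converges `t`-adically, squares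
to `B`, and, being a series in `N` alone, inherits `c(-t)ᵀ = c(t)` from `N`; so `B = c(-t)ᵀ c(t)`.
Finally `d = det C` satisfies `d(-t) d(t) = 1`, so multiplying one row of `C` by `d(-t)` makes the
determinant `1` without changing `C(-t)ᵀ C(t)`.
-/

open Matrix PowerSeries Finset
open scoped Polynomial

namespace Matrix.IsSymm

variable {n K : Type*} [Fintype n] [DecidableEq n]

theorem associated_toQuadraticForm' [CommRing K] [Invertible (2 : K)] {M : Matrix n n K}
    (hM : M.IsSymm) : QuadraticMap.associated M.toQuadraticForm' = toLinearMap₂' K M :=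
  QuadraticMap.associated_left_inverse K (isSymm_toBilin'_iff_isSymm.mpr hM).eq

theorem toMatrix'_toQuadraticForm' [CommRing K] [Invertible (2 : K)] {M : Matrix n n K}
    (hM : M.IsSymm) : M.toQuadraticForm'.toMatrix' = M := by
  rw [QuadraticForm.toMatrix', hM.associated_toQuadraticForm', LinearMap.toMatrix'_toLinearMap₂']

theorem exists_transpose_mul_self_eq [Field K] [IsAlgClosed K] [Invertible (2 : K)]
    {M : Matrix n n K} (hM : M.IsSymm) (hdet : M.det ≠ 0) : ∃ A : Matrix n n K, Aᵀ * A = M := by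
  have separatingLeft {M : Matrix n n K} (hM : M.IsSymm) (hdet : M.det ≠ 0) :
      (QuadraticMap.associated M.toQuadraticForm').SeparatingLeft := by
    rw [hM.associated_toQuadraticForm']
    exact LinearMap.separatingLeft_toLinearMap₂'_of_det_ne_zero' hdet
  obtain ⟨f⟩ := QuadraticForm.equivalent_of_isAlgClosed _ _ (separatingLeft hM hdet)
    (separatingLeft isSymm_one (by simp))
  have hcomp := congrArg QuadraticForm.toMatrix'
    (QuadraticMap.ext fun x ↦ (f.map_app x).symm :
      M.toQuadraticForm' = (1 : Matrix n n K).toQuadraticForm'.comp f.toLinearMap)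
  rw [QuadraticForm.toMatrix'_comp, hM.toMatrix'_toQuadraticForm',
    isSymm_one.toMatrix'_toQuadraticForm', Matrix.mul_one] at hcomp
  exact ⟨_, hcomp.symm⟩

end Matrix.IsSymm

namespace Matrix

variable {n R : Type*} [CommRing R]

/-- `M(aX)ᵀ`; for `a = -1` this is `ρ(M)ᵀ`. -/
noncomputable def rescaleTranspose (M : Matrix n n R⟦X⟧) (a : R) : Matrix n n R⟦X⟧ :=
  (M.map (rescale a))ᵀ

theorem rescaleTranspose_apply (M : Matrix n n R⟦X⟧) (a : R) (i j : n) :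
    M.rescaleTranspose a i j = rescale a (M j i) := rfl

theorem rescaleTranspose_sub (M M' : Matrix n n R⟦X⟧) (a : R) :
    (M - M').rescaleTranspose a = M.rescaleTranspose a - M'.rescaleTranspose a := by
  rw [rescaleTranspose, Matrix.map_sub _ (map_sub _), transpose_sub]; rfl

theorem rescaleTranspose_map_C (A : Matrix n n R) (a : R) :
    (A.map (C (R := R))).rescaleTranspose a = Aᵀ.map C := by
  ext i j k
  simp only [rescaleTranspose_apply, map_apply, transpose_apply, coeff_rescale, coeff_C]
  split_ifs with hk <;> simp [hk]

theorem rescaleTranspose_mul [Fintype n] (M M' : Matrix n n R⟦X⟧) (a : R) :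
    (M * M').rescaleTranspose a = M'.rescaleTranspose a * M.rescaleTranspose a := by
  rw [rescaleTranspose, Matrix.map_mul, transpose_mul]; rfl

variable [DecidableEq n]

theorem rescaleTranspose_one (a : R) : (1 : Matrix n n R⟦X⟧).rescaleTranspose a = 1 := by
  rw [rescaleTranspose, Matrix.map_one _ (map_zero _) (map_one _), transpose_one]

theorem rescaleTranspose_diagonal (v : n → R⟦X⟧) (a : R) :
    (diagonal v).rescaleTranspose a = diagonal fun i ↦ rescale a (v i) := by
  rw [rescaleTranspose, diagonal_map (map_zero _), diagonal_transpose]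

variable [Fintype n]

theorem rescaleTranspose_pow (M : Matrix n n R⟦X⟧) (a : R) (k : ℕ) :
    (M ^ k).rescaleTranspose a = M.rescaleTranspose a ^ k := by
  induction k with
  | zero => exact rescaleTranspose_one a
  | succ k ih => rw [pow_succ, rescaleTranspose_mul, ih, pow_succ']

theorem constantCoeff_mapMatrix_rescaleTranspose (M : Matrix n n R⟦X⟧) (a : R) :
    constantCoeff.mapMatrix (M.rescaleTranspose a) = (constantCoeff.mapMatrix M)ᵀ := by
  ext i j
  simp only [RingHom.mapMatrix_apply, map_apply, transpose_apply, rescaleTranspose_apply,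
    ← coeff_zero_eq_constantCoeff_apply, coeff_rescale, pow_zero, one_mul]

theorem det_rescaleTranspose (M : Matrix n n R⟦X⟧) (a : R) :
    (M.rescaleTranspose a).det = rescale a M.det := by
  rw [rescaleTranspose, det_transpose, ← RingHom.mapMatrix_apply, ← RingHom.map_det]

end Matrix

namespace PowerSeries

variable {n R : Type*} [CommRing R]

theorem ext_coeff_mapMatrix {M M' : Matrix n n R⟦X⟧}
    (h : ∀ m, (coeff m).mapMatrix M = (coeff m).mapMatrix M') : M = M' := by
  ext i j m
  exact congr($(h m) i j)

variable [Fintype n]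

theorem coeff_mapMatrix_mul (m : ℕ) (M M' : Matrix n n R⟦X⟧) :
    (coeff m).mapMatrix (M * M') =
      ∑ p ∈ antidiagonal m, (coeff p.1).mapMatrix M * (coeff p.2).mapMatrix M' := by
  ext i j
  simp only [LinearMap.mapMatrix_apply, map_apply, mul_apply, map_sum, coeff_mul,
    Matrix.sum_apply]
  exact sum_comm

variable [DecidableEq n]

theorem coeff_mapMatrix_pow_eq_zero {N : Matrix n n R⟦X⟧} (hN : constantCoeff.mapMatrix N = 0)
    {m k : ℕ} (h : m < k) : (coeff m).mapMatrix (N ^ k) = 0 := by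
  have hN₀ : (coeff 0).mapMatrix N = 0 := by
    ext i j; simpa using congr($hN i j)
  induction k generalizing m with
  | zero => omega
  | succ k ih =>
    rw [pow_succ, coeff_mapMatrix_mul]
    refine sum_eq_zero fun p hp ↦ ?_
    rw [HasAntidiagonal.mem_antidiagonal] at hp
    rcases Nat.eq_zero_or_pos p.2 with h₂ | h₂
    · rw [h₂, hN₀, Matrix.mul_zero]
    · rw [ih (by omega), Matrix.zero_mul]

/-- `f(N) = ∑ₖ fₖ Nᵏ`, truncated in each coefficient to the terms that contribute to it when
`N(0) = 0` (only then is it a meaningful evaluation). -/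
noncomputable def evalMatrix (f : R⟦X⟧) (N : Matrix n n R⟦X⟧) : Matrix n n R⟦X⟧ :=
  of fun i j ↦ mk fun m ↦ ∑ k ∈ range (m + 1), coeff k f * coeff m ((N ^ k) i j)

theorem coeff_mapMatrix_evalMatrix_eq_sum (f : R⟦X⟧) (N : Matrix n n R⟦X⟧) (m : ℕ) :
    (coeff m).mapMatrix (evalMatrix f N) =
      ∑ k ∈ range (m + 1), coeff k f • (coeff m).mapMatrix (N ^ k) := by
  ext i j
  simp [evalMatrix, Matrix.sum_apply]

theorem coeff_mapMatrix_evalMatrix {N : Matrix n n R⟦X⟧} (hN : constantCoeff.mapMatrix N = 0)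
    (f : R⟦X⟧) {m K : ℕ} (hm : m < K) :
    (coeff m).mapMatrix (evalMatrix f N) =
      (coeff m).mapMatrix (Polynomial.aeval N (trunc K f)) := by
  obtain ⟨K, rfl⟩ : ∃ K', K = K' + 1 := ⟨K - 1, by omega⟩
  rw [Polynomial.aeval_eq_sum_range' (natDegree_trunc_lt f K), map_sum,
    coeff_mapMatrix_evalMatrix_eq_sum]
  refine sum_subset_zero_on_sdiff (range_subset_range.2 (by omega)) (fun k hk ↦ ?_)
    (fun k hk ↦ ?_)
  · rw [mem_sdiff, mem_range, mem_range] at hk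
    rw [map_smul, coeff_mapMatrix_pow_eq_zero hN (by omega), smul_zero]
  · rw [mem_range] at hk
    rw [map_smul, coeff_trunc, if_pos (by omega)]

theorem evalMatrix_coe {N : Matrix n n R⟦X⟧} (hN : constantCoeff.mapMatrix N = 0) (p : R[X]) :
    evalMatrix (p : R⟦X⟧) N = Polynomial.aeval N p := by
  refine ext_coeff_mapMatrix fun m ↦ ?_
  rw [coeff_mapMatrix_evalMatrix hN _ (K := max (m + 1) (p.natDegree + 1))
      (lt_max_of_lt_left m.lt_add_one),
    trunc_coe_eq_self (lt_max_of_lt_right p.natDegree.lt_add_one)]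

theorem evalMatrix_mul {N : Matrix n n R⟦X⟧} (hN : constantCoeff.mapMatrix N = 0) (f g : R⟦X⟧) :
    evalMatrix (f * g) N = evalMatrix f N * evalMatrix g N := by
  refine ext_coeff_mapMatrix fun m ↦ ?_
  -- Up to degree `m` only `trunc (m + 1)` matters, and there evaluation is the ring hom `aeval N`.
  calc (coeff m).mapMatrix (evalMatrix (f * g) N)
      = (coeff m).mapMatrix (evalMatrix ↑(trunc (m + 1) f * trunc (m + 1) g) N) := by
        rw [coeff_mapMatrix_evalMatrix hN _ m.lt_add_one, ← trunc_trunc_mul_trunc,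
          ← Polynomial.coe_mul, ← coeff_mapMatrix_evalMatrix hN _ m.lt_add_one]
    _ = (coeff m).mapMatrix
          (Polynomial.aeval N (trunc (m + 1) f) * Polynomial.aeval N (trunc (m + 1) g)) := by
        rw [evalMatrix_coe hN, map_mul]
    _ = (coeff m).mapMatrix (evalMatrix f N * evalMatrix g N) := by
        simp only [coeff_mapMatrix_mul]
        refine sum_congr rfl fun p hp ↦ ?_
        rw [HasAntidiagonal.mem_antidiagonal] at hp
        rw [coeff_mapMatrix_evalMatrix hN f (K := m + 1) (by omega),
          coeff_mapMatrix_evalMatrix hN g (K := m + 1) (by omega)]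

theorem rescaleTranspose_evalMatrix (f : R⟦X⟧) (N : Matrix n n R⟦X⟧) (a : R) :
    (evalMatrix f N).rescaleTranspose a = evalMatrix f (N.rescaleTranspose a) := by
  ext i j m
  simp only [rescaleTranspose_apply, evalMatrix, of_apply, rescale_mk, coeff_mk,
    ← rescaleTranspose_pow, coeff_rescale, mul_sum]
  exact sum_congr rfl fun k _ ↦ by ring

theorem exists_rescaleTranspose_eq_self_mul_self_eq_one_add [Algebra ℚ R]
    {N : Matrix n n R⟦X⟧} (hN : constantCoeff.mapMatrix N = 0) {a : R}
    (hNa : N.rescaleTranspose a = N) :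
    ∃ c : Matrix n n R⟦X⟧, c.rescaleTranspose a = c ∧ c * c = 1 + N := by
  refine ⟨evalMatrix (binomialSeries R (2⁻¹ : ℚ)) N, by rw [rescaleTranspose_evalMatrix, hNa], ?_⟩
  have hsq : binomialSeries R (2⁻¹ : ℚ) * binomialSeries R (2⁻¹ : ℚ) =
      ((1 + Polynomial.X : R[X]) : R⟦X⟧) := by
    rw [← binomialSeries_add, show (2⁻¹ + 2⁻¹ : ℚ) = (1 : ℕ) by norm_num, binomialSeries_nat]
    simp
  rw [← evalMatrix_mul hN, hsq, evalMatrix_coe hN]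
  simp

end PowerSeries

namespace Matrix

variable {n : Type*} [Fintype n] [DecidableEq n]

theorem exists_rescaleTranspose_mul_self_eq {K : Type*} [Field K] [IsAlgClosed K] [CharZero K]
    {B : Matrix n n K⟦X⟧} {a : K} (hB : B.rescaleTranspose a = B) (hdet : IsUnit B.det) :
    ∃ C : Matrix n n K⟦X⟧, C.rescaleTranspose a * C = B := by
  have hB₀ : (constantCoeff.mapMatrix B).IsSymm := by
    rw [IsSymm, ← constantCoeff_mapMatrix_rescaleTranspose, hB]
  have hdet₀ : (constantCoeff.mapMatrix B).det ≠ 0 := by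
    rw [← RingHom.map_det]; exact (hdet.map constantCoeff).ne_zero
  have : Invertible (2 : K) := invertibleOfNonzero two_ne_zero
  obtain ⟨A, hA⟩ := hB₀.exists_transpose_mul_self_eq hdet₀
  have hAdet : IsUnit A.det := isUnit_iff_ne_zero.2 fun h ↦ hdet₀ <| by
    rw [← hA, det_mul, det_transpose, h, mul_zero]
  have constantCoeff_map_C (M : Matrix n n K) : constantCoeff.mapMatrix (M.map C) = M := by
    ext i j; simp
  set B' := (A⁻¹)ᵀ.map C * B * (A⁻¹).map C
  have hB'₀ : constantCoeff.mapMatrix (B' - 1) = 0 := by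
    rw [map_sub, map_mul, map_mul, constantCoeff_map_C, constantCoeff_map_C, map_one, ← hA,
      ← Matrix.mul_assoc, ← transpose_mul, mul_nonsing_inv _ hAdet, transpose_one,
      Matrix.one_mul, mul_nonsing_inv _ hAdet, sub_self]
  have hB' : (B' - 1).rescaleTranspose a = B' - 1 := by
    rw [rescaleTranspose_sub, rescaleTranspose_one, rescaleTranspose_mul, rescaleTranspose_mul,
      rescaleTranspose_map_C, rescaleTranspose_map_C, transpose_transpose, hB]
    simp only [B', Matrix.mul_assoc]
  obtain ⟨c, hc, hcc⟩ := PowerSeries.exists_rescaleTranspose_eq_self_mul_self_eq_one_add hB'₀ hB'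
  refine ⟨c * A.map C, ?_⟩
  calc (c * A.map C).rescaleTranspose a * (c * A.map C)
      = Aᵀ.map C * (c * c) * A.map C := by
        rw [rescaleTranspose_mul, hc, rescaleTranspose_map_C]; simp only [Matrix.mul_assoc]
    _ = (Aᵀ * (A⁻¹)ᵀ).map C * B * (A⁻¹ * A).map C := by
        rw [hcc, add_sub_cancel, Matrix.map_mul, Matrix.map_mul]; simp only [B', Matrix.mul_assoc]
    _ = B := by
        rw [← transpose_mul, nonsing_inv_mul _ hAdet, transpose_one,
          Matrix.map_one _ (map_zero _) (map_one _), Matrix.one_mul, Matrix.mul_one]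

theorem exists_det_eq_one_and_rescaleTranspose_mul_self_eq {R : Type*} [CommRing R] {a : R}
    (ha : a * a = 1) {B C₀ : Matrix n n R⟦X⟧} (hC₀ : C₀.rescaleTranspose a * C₀ = B)
    (hdet : B.det = 1) : ∃ C : Matrix n n R⟦X⟧, C.det = 1 ∧ C.rescaleTranspose a * C = B := by
  rcases isEmpty_or_nonempty n with hn | ⟨⟨i₀⟩⟩
  · exact ⟨C₀, det_isEmpty, hC₀⟩
  have hd : rescale a C₀.det * C₀.det = 1 := by
    rw [← hdet, ← hC₀, det_mul, det_rescaleTranspose]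
  set D := diagonal (Pi.mulSingle i₀ (rescale a C₀.det))
  have hD : D.rescaleTranspose a * D = 1 := by
    rw [rescaleTranspose_diagonal, diagonal_mul_diagonal, ← diagonal_one]
    congr 1
    funext i
    rcases eq_or_ne i i₀ with rfl | hi
    · rw [Pi.mulSingle_eq_same, rescale_rescale, ha, rescale_one, RingHom.id_apply, mul_comm, hd]
    · simp [hi]
  refine ⟨D * C₀, ?_, ?_⟩
  · rw [det_mul, det_diagonal, prod_pi_mulSingle', if_pos (mem_univ _), hd]
  · rw [rescaleTranspose_mul, Matrix.mul_assoc, ← Matrix.mul_assoc _ D, hD, Matrix.one_mul, hC₀]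

end Matrix

theorem symmetric_powerSeries_matrix_factorization_general (r : ℕ)
    (B : Matrix (Fin r) (Fin r) (PowerSeries ℂ))
    (hdet : B.det = 1)
    (hsym : (B.map (PowerSeries.rescale (-1)))ᵀ = B) :
    ∃ C : Matrix (Fin r) (Fin r) (PowerSeries ℂ),
      C.det = 1 ∧ B = (C.map (PowerSeries.rescale (-1)))ᵀ * C := by
  obtain ⟨C₀, hC₀⟩ := exists_rescaleTranspose_mul_self_eq hsym (hdet ▸ isUnit_one)
  obtain ⟨C, hC, hCB⟩ := exists_det_eq_one_and_rescaleTranspose_mul_self_eq (by norm_num) hC₀ hdet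
  exact ⟨C, hC, hCB.symm⟩

/-- Let `B ∈ M_r(ℂ[[t]])` with `det B = 1` and `ρ(B)ᵀ = B` (i.e. `B(t)ᵀ = B(-t)`),
where `ρ` is the `ℂ`-algebra endomorphism of `ℂ[[t]]` sending `t` to `-t`
(rescaling by `-1`), applied entrywise. Then there exists `C ∈ M_r(ℂ[[t]])` with
`det C = 1` such that `B = ρ(C)ᵀ·C`, i.e. `B(t) = C(-t)ᵀ·C(t)`. -/
theorem symmetric_powerSeries_matrix_factorization (r : ℕ) (hr : 1 ≤ r)
    (B : Matrix (Fin r) (Fin r) (PowerSeries ℂ))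
    (hdet : B.det = 1)
    (hsym : (B.map (PowerSeries.rescale (-1)))ᵀ = B) :
    ∃ C : Matrix (Fin r) (Fin r) (PowerSeries ℂ),
      C.det = 1 ∧ B = (C.map (PowerSeries.rescale (-1)))ᵀ * C :=
  symmetric_powerSeries_matrix_factorization_general r B hdet hsym
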